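/- Suppose a canonical height ĥ : X → ℝ satisfies ĥ(f(P)) + ĥ(f⁻¹(P)) = (d + 1/d)·ĥ(P) for all P, with d > 1, and ĥ ≥ 0. If P is periodic for the bijection f (f^n(P) = P for some n ≥ 1), and moreover ĥ is bounded on the orbit of P, then ĥ(P) = 0. -/

import Mathlib

/-! Along the orbit, `g k = ĥ(f^k P)` satisfies `g (k+1) + g (k-1) = (d + 1/d) g k`, which says
`g (k+1) - g k / d = d (g k - g (k-1) / d)`: the quantity `g (n+1) - g n / d` is `d ^ n` times its
value at `n = 0`. Since `0 ≤ g ≤ C` it stays below `C`, so that value is `≤ 0`, i.e.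
`ĥ(f P) ≤ ĥ(P) / d`; likewise `ĥ(f⁻¹ P) ≤ ĥ(P) / d`. Adding, `(d + 1/d) ĥ(P) ≤ (2/d) ĥ(P)`,
which forces `ĥ(P) = 0` since `d > 1/d`. -/

def HeightRecurrence (d : ℝ) (g : ℤ → ℝ) : Prop :=
  ∀ k, g (k + 1) + g (k - 1) = (d + 1 / d) * g k

namespace HeightRecurrence

variable {d : ℝ} {g : ℤ → ℝ}

theorem comp_neg (hg : HeightRecurrence d g) : HeightRecurrence d fun k => g (-k) := by
  intro k
  simp only
  rw [← hg (-k), neg_add', neg_sub', sub_neg_eq_add, add_comm]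

theorem sub_div_eq_pow_mul (hg : HeightRecurrence d g) (hd : d ≠ 0) (n : ℕ) :
    g (n + 1) - g n / d = d ^ n * (g 1 - g 0 / d) := by
  induction n with
  | zero => simp
  | succ n ih =>
    have hrec := hg (n + 1)
    rw [add_sub_cancel_right] at hrec
    push_cast
    calc g (n + 1 + 1) - g (n + 1) / d = d * (g (n + 1) - g n / d) := by
          rw [mul_sub, mul_div_cancel₀ _ hd]
          linear_combination hrec
      _ = d ^ (n + 1) * (g 1 - g 0 / d) := by rw [ih, pow_succ']; ring

theorem le_div_of_le (hg : HeightRecurrence d g) (hd : 1 < d) (hg0 : ∀ k, 0 ≤ g k) {C : ℝ}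
    (hC : ∀ k, g k ≤ C) : g 1 ≤ g 0 / d := by
  by_contra! hlt
  have hpos : 0 < g 1 - g 0 / d := sub_pos.mpr hlt
  obtain ⟨n, hn⟩ := pow_unbounded_of_one_lt (C / (g 1 - g 0 / d)) hd
  have hgrowth : C < g (n + 1) - g n / d := by
    rw [hg.sub_div_eq_pow_mul (by positivity) n]
    exact (div_lt_iff₀ hpos).mp hn
  have : 0 ≤ g n / d := div_nonneg (hg0 n) (by positivity)
  linarith [hC (n + 1)]

theorem eq_zero_of_le (hg : HeightRecurrence d g) (hd : 1 < d) (hg0 : ∀ k, 0 ≤ g k) {C : ℝ}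
    (hC : ∀ k, g k ≤ C) : g 0 = 0 := by
  have hfwd := hg.le_div_of_le hd hg0 hC
  have hbwd := hg.comp_neg.le_div_of_le hd (fun k => hg0 (-k)) (fun k => hC (-k))
  simp only [neg_zero] at hbwd
  have hsum := hg 0
  simp only [zero_add, zero_sub] at hsum
  have hcollapse : (d + 1 / d) * g 0 ≤ 2 * (g 0 / d) := by linarith
  have hd0 : 0 < d := by linarith
  have hnonpos : (d ^ 2 - 1) * g 0 ≤ 0 := by
    field_simp at hcollapse
    linarith
  exact le_antisymm (nonpos_of_mul_nonpos_right hnonpos (by nlinarith)) (hg0 0)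

end HeightRecurrence

theorem heightRecurrence_orbit {X : Type*} (f : Equiv.Perm X) {d : ℝ} (h : X → ℝ)
    (heq : ∀ P, h (f P) + h (f.symm P) = (d + 1 / d) * h P) (P : X) :
    HeightRecurrence d fun k => h ((f ^ k) P) := by
  intro k
  simp only
  rw [add_comm k, sub_eq_neg_add, zpow_add, zpow_add, zpow_one, zpow_neg_one]
  exact heq _

/-- If a nonnegative canonical height satisfies
`ĥ(f(P)) + ĥ(f⁻¹(P)) = (d + 1/d)·ĥ(P)` with `d > 1`, and `ĥ` is bounded on the
full (forward and backward) orbit of `P`, then `ĥ(P) = 0`. -/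
theorem canonical_height_zero_on_bounded_orbits {X : Type*} (f : Equiv.Perm X)
    (d : ℝ) (hd : 1 < d) (h : X → ℝ) (h0 : ∀ P, 0 ≤ h P)
    (heq : ∀ P, h (f P) + h (f.symm P) = (d + 1 / d) * h P)
    (P : X) (hb : ∃ C : ℝ, ∀ k : ℤ, h ((f ^ k) P) ≤ C) :
    h P = 0 := by
  obtain ⟨C, hC⟩ := hb
  exact (heightRecurrence_orbit f h heq P).eq_zero_of_le hd (fun k => h0 _) hC
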